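/- arXiv:2303.09398 — 8 statements merged into one kernel-verified Lean document; each statement's English description precedes it below -/
import Mathlib

section
/- Let · be a nondegenerate cycle set operation on a set X. If x·y = y·x for some x, y ∈ X, then x = y. In particular the cycle matrix of a nondegenerate cycle set on {1,…,n} has m_{ij} ≠ m_{ji} whenever i ≠ j, so it is not symmetric. -/
def IsCycleSet {X : Type*} (op : X → X → X) : Prop :=
  (∀ x, Function.Bijective fun y => op x y) ∧
  ∀ x y z, op (op x y) (op x z) = op (op y x) (op y z)

def IsNondegenerate {X : Type*} (op : X → X → X) : Prop :=
  Function.Bijective fun x => op x x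

/-- In a nondegenerate cycle set, `x·y = y·x` forces `x = y`; in particular the
cycle matrix is not symmetric. -/
theorem cycle_matrix_not_symmetric {X : Type*} (op : X → X → X)
    (h : IsCycleSet op) (hnd : IsNondegenerate op)
    {x y : X} (hxy : op x y = op y x) : x = y := by
  obtain ⟨hbij, hcs⟩ := h
  -- z = y : (x·y)·(x·y) = (y·x)·(y·y)
  have h1 := hcs x y y
  rw [hxy] at h1
  have hy : op y x = op y y := (hbij (op y x)).1 h1
  -- z = x : (y·x)·(y·x) = (x·y)·(x·x)
  have h2 := hcs y x x
  rw [hxy] at h2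
  have hx : op y x = op x x := (hbij (op y x)).1 h2
  have : op x x = op y y := by rw [← hx, ← hy]
  exact hnd.1 this
end

section
/- Let R be a commutative ring with unity, let n ≥ 1, and let σ₁, …, σₙ be permutations of Fin n such that the subgroup of the symmetric group on Fin n generated by σ₁, …, σₙ does NOT act transitively on Fin n. Then the determinant of the n×n matrix over the multivariate polynomial ring R[x₀, …, x_{n-1}] whose (i,j) entry is the variable x_{σᵢ(j)} is zero. -/
/-!
Let `O` be the orbit of a point `a` under the group generated by the `σᵢ`, and suppose `b ∉ O`.
Each row of the matrix is a permutation of the variables preserving `O`, so in every row the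
entries in the columns of `O` add up to `S = ∑_{k ∈ O} x_k` and the remaining ones to
`S' = ∑_{k ∉ O} x_k`. Hence the vector equal to `S'` on `O` and to `-S` off `O` lies in the kernel;
it is nonzero because `x_b` occurs in `S'`. Over `ℤ` the polynomial ring is a domain, so the
determinant vanishes, and the case of an arbitrary `R` is the image under `ℤ → R`.
-/

open Matrix MvPolynomial

section InvariantFinset

variable {ι m A : Type*}

theorem Finset.sum_comp_perm_of_forall_mem_iff {M : Type*} [AddCommMonoid M] (σ : Equiv.Perm ι)
    {s : Finset ι} (hs : ∀ k, σ k ∈ s ↔ k ∈ s) (f : ι → M) :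
    ∑ j ∈ s, f (σ j) = ∑ j ∈ s, f j :=
  Finset.sum_equiv σ (fun k => (hs k).symm) (fun _ _ => rfl)

variable [Fintype ι] [DecidableEq ι]

theorem Matrix.mulVec_of_comp_perm_eq_zero [CommRing A] (x : ι → A) (σ : m → Equiv.Perm ι)
    {s : Finset ι} (hs : ∀ i k, σ i k ∈ s ↔ k ∈ s) :
    (of fun i j => x (σ i j)) *ᵥ (fun j => if j ∈ s then ∑ k ∈ sᶜ, x k else -∑ k ∈ s, x k) =
      0 := by
  have hsc : ∀ i k, σ i k ∈ sᶜ ↔ k ∈ sᶜ := fun i k => by simp only [Finset.mem_compl, hs]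
  funext i
  simp only [mulVec, dotProduct, of_apply, Pi.zero_apply]
  rw [← Finset.sum_add_sum_compl s,
    Finset.sum_congr rfl fun j hj => congrArg _ (if_pos hj),
    Finset.sum_congr rfl fun j hj => congrArg _ (if_neg (Finset.mem_compl.mp hj)), ← Finset.sum_mul,
    ← Finset.sum_mul, Finset.sum_comp_perm_of_forall_mem_iff _ (hs i),
    Finset.sum_comp_perm_of_forall_mem_iff _ (hsc i)]
  ring

theorem Matrix.det_of_comp_perm_eq_zero [CommRing A] [IsDomain A] (x : ι → A)
    (σ : ι → Equiv.Perm ι) {s : Finset ι} (hs : ∀ i k, σ i k ∈ s ↔ k ∈ s) {a : ι} (ha : a ∈ s)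
    (hx : ∑ k ∈ sᶜ, x k ≠ 0) :
    (of fun i j => x (σ i j)).det = 0 :=
  exists_mulVec_eq_zero_iff.mp ⟨_, fun h => hx (by simpa [ha] using congrFun h a),
    mulVec_of_comp_perm_eq_zero x σ hs⟩

end InvariantFinset

theorem MvPolynomial.sum_X_ne_zero {σ R : Type*} [CommSemiring R] [Nontrivial R]
    [DecidableEq σ] {t : Finset σ} (ht : t.Nonempty) : ∑ k ∈ t, (X k : MvPolynomial σ R) ≠ 0 := by
  obtain ⟨b, hb⟩ := ht
  intro h
  have := congrArg (eval (Pi.single b 1)) h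
  simp [Finset.sum_pi_single', hb] at this

theorem MulAction.smul_mem_orbit_iff {G α : Type*} [Group G] [MulAction G α] (g : G) {a b : α} :
    g • b ∈ orbit G a ↔ b ∈ orbit G a := by
  rw [← orbit_eq_iff, ← orbit_eq_iff, orbit_smul]

theorem det_zero_of_intransitive_general (R : Type*) [CommRing R] (n : ℕ)
    (σ : Fin n → Equiv.Perm (Fin n))
    (hintrans : ¬ ∀ a b : Fin n,
      ∃ g ∈ Subgroup.closure (Set.range σ), g a = b) :
    Matrix.det
      (Matrix.of fun i j => (MvPolynomial.X (σ i j) : MvPolynomial (Fin n) R)) = 0 := by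
  classical
  set G := Subgroup.closure (Set.range σ)
  push Not at hintrans
  obtain ⟨a, b, hb⟩ := hintrans
  set O := (MulAction.orbit G a).toFinset
  have hO : ∀ i k, σ i k ∈ O ↔ k ∈ O := fun i k => by
    simpa [O] using
      MulAction.smul_mem_orbit_iff (⟨σ i, Subgroup.subset_closure ⟨i, rfl⟩⟩ : G) (a := a) (b := k)
  have hbO : b ∈ Oᶜ := by
    simpa [O, MulAction.mem_orbit_iff] using hb
  have hdet : (of fun i j => (X (σ i j) : MvPolynomial (Fin n) ℤ)).det = 0 :=
    det_of_comp_perm_eq_zero X σ hO (Set.mem_toFinset.mpr (MulAction.mem_orbit_self a))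
      (sum_X_ne_zero ⟨b, hbO⟩)
  simpa [RingHom.map_det, RingHom.mapMatrix_apply, Matrix.map] using
    congrArg (MvPolynomial.map (Int.castRingHom R)) hdet

/-- If the subgroup generated by the rows (permutations) acts intransitively,
the determinant of the matrix of variables `x_{σᵢ(j)}` is zero. -/
theorem det_zero_of_intransitive (R : Type*) [CommRing R] (n : ℕ) (hn : 1 ≤ n)
    (σ : Fin n → Equiv.Perm (Fin n))
    (hintrans : ¬ ∀ a b : Fin n,
      ∃ g ∈ Subgroup.closure (Set.range σ), g a = b) :
    Matrix.det
      (Matrix.of fun i j => (MvPolynomial.X (σ i j) : MvPolynomial (Fin n) R)) = 0 :=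
  det_zero_of_intransitive_general R n σ hintrans
end

section
/- Let · be a cycle set operation on Fin n, and let M be the n×n integer matrix whose (i,j) entry is the integer value of i·j. If det M ≠ 0, then the subgroup of the symmetric group on Fin n generated by the left translations {ψ_i : i ∈ Fin n} acts transitively on Fin n (i.e., the associated solution is indecomposable). -/
/-- A cycle matrix with non-zero determinant gives an indecomposable solution:
the group generated by the left translations acts transitively. -/
theorem transitive_of_det_ne_zero {n : ℕ} (op : Fin n → Fin n → Fin n)
    (h : IsCycleSet op)
    (hdet : Matrix.det (Matrix.of fun i j => ((op i j : ℕ) : ℤ)) ≠ 0) :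
    ∀ a b : Fin n,
      ∃ g ∈ Subgroup.closure {g : Equiv.Perm (Fin n) | ∃ i, ∀ j, g j = op i j},
        g a = b := by
  classical
  intro a b
  by_contra hc
  push_neg at hc
  set G := Subgroup.closure {g : Equiv.Perm (Fin n) | ∃ i, ∀ j, g j = op i j} with hG
  set Y : Finset (Fin n) := Finset.univ.filter (fun x => ∃ g ∈ G, g a = x) with hY
  have haY : a ∈ Y := by
    simp only [hY, Finset.mem_filter, Finset.mem_univ, true_and]
    exact ⟨1, G.one_mem, rfl⟩
  have hbY : b ∉ Y := by
    simp only [hY, Finset.mem_filter, Finset.mem_univ, true_and]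
    rintro ⟨g, hg, hgb⟩
    exact hc g hg hgb
  have hmemG : ∀ i, Equiv.ofBijective _ (h.1 i) ∈ G :=
    fun i => Subgroup.subset_closure ⟨i, fun j => rfl⟩
  have hYclosed : ∀ g ∈ G, ∀ x ∈ Y, g x ∈ Y := by
    intro g hg x hx
    simp only [hY, Finset.mem_filter, Finset.mem_univ, true_and] at hx ⊢
    obtain ⟨g', hg', hgx⟩ := hx
    exact ⟨g * g', G.mul_mem hg hg', by simp [hgx]⟩
  have himg : ∀ i, Y.image (fun y => op i y) = Y := by
    intro i
    apply Finset.eq_of_subset_of_card_le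
    · intro x hx
      simp only [Finset.mem_image] at hx
      obtain ⟨y, hy, rfl⟩ := hx
      exact hYclosed _ (hmemG i) y hy
    · rw [Finset.card_image_of_injective _ (h.1 i).1]
  have hsumY : ∀ i, ∑ j ∈ Y, ((op i j : ℕ) : ℤ) = ∑ y ∈ Y, ((y : ℕ) : ℤ) := by
    intro i
    conv_rhs => rw [← himg i]
    rw [Finset.sum_image (fun x _ y _ hxy => (h.1 i).1 hxy)]
  have hsumU : ∀ i, ∑ j : Fin n, ((op i j : ℕ) : ℤ) = ∑ y : Fin n, ((y : ℕ) : ℤ) :=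
    fun i => Equiv.sum_comp (Equiv.ofBijective _ (h.1 i)) (fun y : Fin n => ((y : ℕ) : ℤ))
  have hsumZ : ∀ i, ∑ j ∈ Yᶜ, ((op i j : ℕ) : ℤ) = ∑ z ∈ Yᶜ, ((z : ℕ) : ℤ) := by
    intro i
    have h1 := Finset.sum_add_sum_compl Y (fun j => ((op i j : ℕ) : ℤ))
    have h2 := Finset.sum_add_sum_compl Y (fun z : Fin n => ((z : ℕ) : ℤ))
    have := hsumU i
    rw [← h1, ← h2, hsumY i] at this
    omega
  set sY : ℤ := ∑ y ∈ Y, ((y : ℕ) : ℤ) with hsY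
  set sZ : ℤ := ∑ z ∈ Yᶜ, ((z : ℕ) : ℤ) with hsZ
  set u : Fin n → ℤ := fun j => if j ∈ Y then sZ else -sY with hu
  have hmul : (Matrix.of fun i j => ((op i j : ℕ) : ℤ)).mulVec u = 0 := by
    funext i
    simp only [Matrix.mulVec, dotProduct, Matrix.of_apply, Pi.zero_apply]
    rw [← Finset.sum_add_sum_compl Y]
    have e1 : ∑ j ∈ Y, ((op i j : ℕ) : ℤ) * u j = sY * sZ := by
      have hco : ∀ j ∈ Y, ((op i j : ℕ) : ℤ) * u j = ((op i j : ℕ) : ℤ) * sZ := by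
        intro j hj; simp [hu, hj]
      rw [Finset.sum_congr rfl hco, ← Finset.sum_mul, hsumY i]
    have e2 : ∑ j ∈ Yᶜ, ((op i j : ℕ) : ℤ) * u j = sZ * (-sY) := by
      have hco : ∀ j ∈ Yᶜ, ((op i j : ℕ) : ℤ) * u j = ((op i j : ℕ) : ℤ) * (-sY) := by
        intro j hj; simp [hu, Finset.mem_compl.mp hj]
      rw [Finset.sum_congr rfl hco, ← Finset.sum_mul, hsumZ i]
    rw [e1, e2]; ring
  have hu0 : u = 0 := Matrix.eq_zero_of_mulVec_eq_zero hdet hmul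
  have hZnn : ∀ z ∈ Yᶜ, (0:ℤ) ≤ ((z : ℕ) : ℤ) := fun z _ => Int.ofNat_nonneg _
  have hYnn : ∀ y ∈ Y, (0:ℤ) ≤ ((y : ℕ) : ℤ) := fun y _ => Int.ofNat_nonneg _
  have hua : u a = 0 := congrFun hu0 a
  have hub : u b = 0 := congrFun hu0 b
  rw [hu] at hua hub
  simp only [haY, if_pos, hbY, if_neg, not_false_iff] at hua hub
  -- hua : sZ = 0, hub : -sY = 0
  have hbz : ((b : ℕ) : ℤ) = 0 := by
    have := (Finset.sum_eq_zero_iff_of_nonneg hZnn).mp hua b (Finset.mem_compl.mpr hbY)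
    exact this
  have haz : ((a : ℕ) : ℤ) = 0 := by
    have hsY0 : sY = 0 := by omega
    exact (Finset.sum_eq_zero_iff_of_nonneg hYnn).mp hsY0 a haY
  have : a = b := Fin.ext (by omega)
  rw [this] at haY
  exact hbY haY
end

section
/- Let A and B be sets, ι an index type, p : A → ι a block function, β : ι → Perm(A) a family of permutations each of which preserves every fiber of p (p(β_i(a)) = p(a) for all i ∈ ι, a ∈ A), and α : ι → Perm(B) a family of pairwise commuting permutations (α_i ∘ α_j = α_j ∘ α_i for all i, j). Define a binary operation ⋆ on the disjoint union A ⊔ B by: a ⋆ a' = a' for a, a' ∈ A; a ⋆ b = α_{p(a)}(b) for a ∈ A, b ∈ B; b ⋆ a = β_{p(a)}(a) for b ∈ B, a ∈ A; and b ⋆ b' = b' for b, b' ∈ B. Then ⋆ is a nondegenerate cycle set operation on A ⊔ B (in fact square-free: x ⋆ x = x for all x). -/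
/-- The block construction on the disjoint union of two trivial solutions:
`a ⋆ a' = a'`, `a ⋆ b = α_{p a} b`, `b ⋆ a = β_{p a} a`, `b ⋆ b' = b'`. -/
def blockOp {A B ι : Type*} (p : A → ι) (α : ι → Equiv.Perm B)
    (β : ι → Equiv.Perm A) : A ⊕ B → A ⊕ B → A ⊕ B
  | Sum.inl _, Sum.inl a' => Sum.inl a'
  | Sum.inl a, Sum.inr b => Sum.inr (α (p a) b)
  | Sum.inr _, Sum.inl a => Sum.inl (β (p a) a)
  | Sum.inr _, Sum.inr b' => Sum.inr b'

/-- The block construction gives a nondegenerate (indeed square-free) cycle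
set operation on `A ⊕ B`. -/
theorem blockOp_is_cycle_set {A B ι : Type*} (p : A → ι)
    (β : ι → Equiv.Perm A) (hβ : ∀ i a, p (β i a) = p a)
    (α : ι → Equiv.Perm B) (hα : ∀ i j, α i * α j = α j * α i) :
    IsCycleSet (blockOp p α β) ∧ IsNondegenerate (blockOp p α β) ∧
      ∀ x : A ⊕ B, blockOp p α β x x = x := by
  have hβ' : ∀ i a, p ((β i).symm a) = p a := fun i a => by
    conv_rhs => rw [← Equiv.apply_symm_apply (β i) a, hβ]
  have hsq : ∀ x : A ⊕ B, blockOp p α β x x = x := by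
    intro x; cases x <;> rfl
  refine ⟨⟨fun x => ?_, fun x y z => ?_⟩, ?_, hsq⟩
  · cases x with
    | inl a =>
      refine Function.bijective_iff_has_inverse.2
        ⟨Sum.map id (α (p a)).symm, fun y => ?_, fun y => ?_⟩ <;>
      cases y <;> simp [blockOp]
    | inr b =>
      refine Function.bijective_iff_has_inverse.2
        ⟨Sum.map (fun a => (β (p a)).symm a) id, fun y => ?_, fun y => ?_⟩ <;>
      cases y <;> simp [blockOp, hβ, hβ']
  · rcases x with a | b <;> rcases y with a' | b' <;> rcases z with a'' | b'' <;>
      simp [blockOp, hβ]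
    exact (Equiv.Perm.mul_apply _ _ _).symm.trans (((Equiv.ext_iff.1 (hα (p a) (p a')) b'').symm).trans (Equiv.Perm.mul_apply _ _ _))
  · have : (fun x : A ⊕ B => blockOp p α β x x) = id := funext hsq
    unfold IsNondegenerate
    rw [this]
    exact Function.bijective_id
end

section
/- Let A, B, ι, p : A → ι, β : ι → Perm(A) with p(β_i(a)) = p(a) for all i, a, and pairwise commuting α : ι → Perm(B) be as in the block construction, and let ⋆ be the operation on A ⊔ B given by a ⋆ a' = a', a ⋆ b = α_{p(a)}(b), b ⋆ a = β_{p(a)}(a), b ⋆ b' = b'. Then for all x, y ∈ A ⊔ B the left translations satisfy ψ_{x⋆y} = ψ_y; that is, the retraction of (A ⊔ B, ⋆) is a trivial solution, so (A ⊔ B, ⋆) has multipermutation level at most 2. -/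
/-- For the block construction, `ψ_{x ⋆ y} = ψ_y` for all `x, y`: the
retraction is a trivial solution, so the solution has multipermutation level
at most 2. -/
theorem blockOp_multipermutation_level_two {A B ι : Type*} (p : A → ι)
    (β : ι → Equiv.Perm A) (hβ : ∀ i a, p (β i a) = p a)
    (α : ι → Equiv.Perm B) (hα : ∀ i j, α i * α j = α j * α i) :
    ∀ x y z : A ⊕ B,
      blockOp p α β (blockOp p α β x y) z = blockOp p α β y z := by
  rintro (a|b) (a'|b') (a''|b'') <;> simp [blockOp, hβ]
end

section
/- For every finite abelian group G there exists a finite set X and a nondegenerate cycle set operation ⋆ on X such that the subgroup of the symmetric group on X generated by the left translations {ψ_x : x ∈ X} is isomorphic to G; that is, every finite abelian group occurs as the permutation group of a finite nondegenerate involutive set-theoretic solution of the Yang–Baxter equation. -/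
section Aux

variable {G : Type} [CommGroup G]

/-- translation by `a` on the second copy. -/
def tauPerm (a : G) : Equiv.Perm (G × Bool) where
  toFun p := (if p.2 then a * p.1 else p.1, p.2)
  invFun p := (if p.2 then a⁻¹ * p.1 else p.1, p.2)
  left_inv p := by rcases p with ⟨b, _ | _⟩ <;> simp
  right_inv p := by rcases p with ⟨b, _ | _⟩ <;> simp

def tauHom : G →* Equiv.Perm (G × Bool) where
  toFun := tauPerm
  map_one' := by
    ext p <;> rcases p with ⟨b, _ | _⟩ <;> simp [tauPerm]
  map_mul' a b := by
    ext p <;> rcases p with ⟨c, _ | _⟩ <;> simp [tauPerm, mul_assoc]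

def myOp (p q : G × Bool) : G × Bool :=
  (if p.2 = false ∧ q.2 = true then p.1 * q.1 else q.1, q.2)

lemma myOp_eq_tau (p q : G × Bool) :
    myOp p q = tauPerm (if p.2 then 1 else p.1) q := by
  rcases p with ⟨a, _ | _⟩ <;> rcases q with ⟨b, _ | _⟩ <;>
    simp [myOp, tauPerm]

lemma tauHom_injective : Function.Injective (tauHom (G := G)) := by
  intro a b h
  have := congrArg (fun g : Equiv.Perm (G × Bool) => (g (1, true)).1) h
  simpa [tauHom, tauPerm] using this

end Aux

/-- Every finite abelian group is the permutation group of a finite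
nondegenerate involutive set-theoretic solution of the Yang–Baxter equation. -/
theorem finite_abelian_group_is_permutation_group
    (G : Type) [Fintype G] [CommGroup G] :
    ∃ (X : Type) (_ : Fintype X) (op : X → X → X),
      IsCycleSet op ∧ IsNondegenerate op ∧
      Nonempty
        ((Subgroup.closure {g : Equiv.Perm X | ∃ x, ∀ y, g y = op x y}) ≃* G) := by
  refine ⟨G × Bool, inferInstance, myOp, ⟨?_, ?_⟩, ?_, ?_⟩
  · -- bijectivity of left translations
    intro x
    have h : (fun y => myOp x y) = ⇑(tauPerm (if x.2 then 1 else x.1)) :=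
      funext fun y => myOp_eq_tau x y
    rw [h]
    exact (tauPerm _).bijective
  · -- cycle set identity
    rintro ⟨a, _ | _⟩ ⟨b, _ | _⟩ ⟨c, _ | _⟩ <;>
      simp [myOp, mul_comm, mul_assoc, mul_left_comm]
  · -- nondegeneracy
    have h : (fun x : G × Bool => myOp x x) = id := by
      funext p
      rcases p with ⟨a, _ | _⟩ <;> simp [myOp]
    rw [IsNondegenerate, h]
    exact Function.bijective_id
  · -- permutation group ≅ G
    have hset : {g : Equiv.Perm (G × Bool) | ∃ x, ∀ y, g y = myOp x y}
        = Set.range (tauHom (G := G)) := by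
      ext g
      constructor
      · rintro ⟨x, hx⟩
        refine ⟨if x.2 then 1 else x.1, ?_⟩
        ext y
        · rw [show (tauHom (G := G)) (if x.2 then 1 else x.1) = tauPerm (if x.2 then 1 else x.1) from rfl]
          rw [← myOp_eq_tau, ← hx]
        · rw [show (tauHom (G := G)) (if x.2 then 1 else x.1) = tauPerm (if x.2 then 1 else x.1) from rfl]
          rw [← myOp_eq_tau, ← hx]
      · rintro ⟨a, rfl⟩
        exact ⟨(a, false), fun y => by
          rw [myOp_eq_tau]; rfl⟩
    rw [hset]
    have hcl : Subgroup.closure (Set.range (tauHom (G := G)))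
        = (tauHom (G := G)).range := by
      rw [← MonoidHom.coe_range, Subgroup.closure_eq]
    rw [hcl]
    exact ⟨(MonoidHom.ofInjective tauHom_injective).symm⟩
end

section
/- Let ι be a type, and for each i ∈ ι let ·_i be a cycle set operation on a set X_i with automorphism α_i. Let Θ be a permutation of ι. Define an operation ⋆ on the disjoint union (sigma type) Σ_{i∈ι} X_i by: for x ∈ X_μ and y ∈ X_ν, x ⋆ y := x ·_μ y if μ = ν; x ⋆ y := α_ν(y) if Θ(μ) = ν and μ ≠ ν; and x ⋆ y := y otherwise (the result always lying in X_ν). Then ⋆ is a cycle set operation on Σ_{i∈ι} X_i; moreover, if every ·_i is nondegenerate then ⋆ is nondegenerate. -/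
/-- The block operation on the disjoint union `Σ i, X i` determined by a
permutation `Θ` of the index set: within a block use the given operation,
from block `μ` to block `Θ μ` act by the automorphism `α_{Θ μ}`, and between
other blocks act trivially. -/
def sigmaOp {ι : Type*} [DecidableEq ι] {X : ι → Type*}
    (op : ∀ i, X i → X i → X i) (α : ∀ i, Equiv.Perm (X i)) (Θ : Equiv.Perm ι) :
    (Σ i, X i) → (Σ i, X i) → Σ i, X i
  | ⟨μ, a⟩, ⟨ν, b⟩ =>
    if h : μ = ν then ⟨ν, op ν (h ▸ a) b⟩
    else if Θ μ = ν then ⟨ν, α ν b⟩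
    else ⟨ν, b⟩


section sigmaOpAux
variable {ι : Type*} [DecidableEq ι] {X : ι → Type*}
    (op : ∀ i, X i → X i → X i) (α : ∀ i, Equiv.Perm (X i)) (Θ : Equiv.Perm ι)

lemma sigmaOp_same (ν : ι) (a b : X ν) :
    sigmaOp op α Θ ⟨ν, a⟩ ⟨ν, b⟩ = ⟨ν, op ν a b⟩ := by
  simp [sigmaOp]

lemma sigmaOp_theta {μ ν : ι} (h : μ ≠ ν) (h2 : Θ μ = ν) (a : X μ) (b : X ν) :
    sigmaOp op α Θ ⟨μ, a⟩ ⟨ν, b⟩ = ⟨ν, α ν b⟩ := by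
  simp [sigmaOp, h, h2]

lemma sigmaOp_other {μ ν : ι} (h : μ ≠ ν) (h2 : Θ μ ≠ ν) (a : X μ) (b : X ν) :
    sigmaOp op α Θ ⟨μ, a⟩ ⟨ν, b⟩ = ⟨ν, b⟩ := by
  simp [sigmaOp, h, h2]

lemma sigmaOp_fst (x y : Σ i, X i) : (sigmaOp op α Θ x y).1 = y.1 := by
  rcases x with ⟨μ, a⟩; rcases y with ⟨ν, b⟩
  by_cases h : μ = ν
  · subst h; rw [sigmaOp_same]
  · by_cases h2 : Θ μ = ν
    · rw [sigmaOp_theta op α Θ h h2]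
    · rw [sigmaOp_other op α Θ h h2]

lemma sigmaOp_bij (hop : ∀ i x, Function.Bijective fun y => op i x y) (x : Σ i, X i) :
    Function.Bijective fun y => sigmaOp op α Θ x y := by
  obtain ⟨μ, a⟩ := x
  constructor
  · rintro ⟨ν, b⟩ ⟨ρ, c⟩ h
    have hfst : ν = ρ := by
      have h1 := congrArg Sigma.fst h
      simpa only [sigmaOp_fst] using h1
    subst hfst
    by_cases hm : μ = ν
    · subst hm
      simp only [sigmaOp_same] at h
      have hbc := (hop μ a).1 (sigma_mk_injective h)
      rw [hbc]
    · by_cases h2 : Θ μ = ν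
      · simp only [sigmaOp_theta op α Θ hm h2] at h
        have hbc := (α ν).injective (sigma_mk_injective h)
        rw [hbc]
      · simp only [sigmaOp_other op α Θ hm h2] at h
        exact h
  · rintro ⟨ν, b⟩
    by_cases hm : μ = ν
    · subst hm
      obtain ⟨b', hb'⟩ := (hop μ a).2 b
      exact ⟨⟨μ, b'⟩, by simp only [sigmaOp_same]; exact congrArg (Sigma.mk μ) hb'⟩
    · by_cases h2 : Θ μ = ν
      · exact ⟨⟨ν, (α ν).symm b⟩, by simp only [sigmaOp_theta op α Θ hm h2]; simp⟩
      · exact ⟨⟨ν, b⟩, by simp only [sigmaOp_other op α Θ hm h2]⟩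

lemma sigmaOp_nondeg (hnd : ∀ i, Function.Bijective fun x => op i x x) :
    Function.Bijective fun x => sigmaOp op α Θ x x := by
  constructor
  · rintro ⟨μ, a⟩ ⟨ν, b⟩ h
    simp only [sigmaOp_same] at h
    have hfst : μ = ν := congrArg Sigma.fst h
    subst hfst
    have hab := (hnd μ).1 (sigma_mk_injective h)
    rw [hab]
  · rintro ⟨μ, b⟩
    obtain ⟨a, ha⟩ := (hnd μ).2 b
    exact ⟨⟨μ, a⟩, by simp only [sigmaOp_same]; exact congrArg (Sigma.mk μ) ha⟩

end sigmaOpAux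

section sigmaOpLaw
variable {ι : Type*} [DecidableEq ι] {X : ι → Type*}
    (op : ∀ i, X i → X i → X i) (α : ∀ i, Equiv.Perm (X i)) (Θ : Equiv.Perm ι)

lemma sigmaOp_law
    (hop : ∀ i, ∀ x y z, op i (op i x y) (op i x z) = op i (op i y x) (op i y z))
    (hα : ∀ i a b, α i (op i a b) = op i (α i a) (α i b)) :
    ∀ x y z, sigmaOp op α Θ (sigmaOp op α Θ x y) (sigmaOp op α Θ x z)
      = sigmaOp op α Θ (sigmaOp op α Θ y x) (sigmaOp op α Θ y z) := by
  rintro ⟨μ, a⟩ ⟨ν, b⟩ ⟨ρ, c⟩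
  by_cases hμν : μ = ν
  · subst hμν
    by_cases hμρ : μ = ρ
    · subst hμρ
      simp only [sigmaOp_same]
      rw [hop μ]
    · by_cases hθ : Θ μ = ρ
      · simp only [sigmaOp_same, sigmaOp_theta op α Θ hμρ hθ]
      · simp only [sigmaOp_same, sigmaOp_other op α Θ hμρ hθ]
  · by_cases hνρ : ν = ρ
    · subst hνρ
      by_cases hθ : Θ μ = ν
      · by_cases hθ' : Θ ν = μ
        · simp only [sigmaOp_same, sigmaOp_theta op α Θ hμν hθ,
            sigmaOp_theta op α Θ (Ne.symm hμν) hθ', hα]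
        · simp only [sigmaOp_same, sigmaOp_theta op α Θ hμν hθ,
            sigmaOp_other op α Θ (Ne.symm hμν) hθ', hα]
      · by_cases hθ' : Θ ν = μ
        · simp only [sigmaOp_same, sigmaOp_other op α Θ hμν hθ,
            sigmaOp_theta op α Θ (Ne.symm hμν) hθ']
        · simp only [sigmaOp_same, sigmaOp_other op α Θ hμν hθ,
            sigmaOp_other op α Θ (Ne.symm hμν) hθ']
    · by_cases hμρ : μ = ρ
      · subst hμρ
        by_cases hθ : Θ μ = ν
        · by_cases hθ' : Θ ν = μ
          · simp only [sigmaOp_same, sigmaOp_theta op α Θ hμν hθ,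
              sigmaOp_theta op α Θ (Ne.symm hμν) hθ', hα]
          · simp only [sigmaOp_same, sigmaOp_theta op α Θ hμν hθ,
              sigmaOp_other op α Θ (Ne.symm hμν) hθ']
        · by_cases hθ' : Θ ν = μ
          · simp only [sigmaOp_same, sigmaOp_other op α Θ hμν hθ,
              sigmaOp_theta op α Θ (Ne.symm hμν) hθ', hα]
          · simp only [sigmaOp_same, sigmaOp_other op α Θ hμν hθ,
              sigmaOp_other op α Θ (Ne.symm hμν) hθ']
      · -- all distinct
        by_cases hθ2 : Θ μ = ρ
        · by_cases hθ4 : Θ ν = ρ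
          · exact absurd (Θ.injective (hθ2.trans hθ4.symm)) hμν
          · by_cases hθ1 : Θ μ = ν
            · exact absurd (hθ1.symm.trans hθ2) hνρ
            · by_cases hθ3 : Θ ν = μ
              · simp only [sigmaOp_other op α Θ hμν hθ1, sigmaOp_theta op α Θ hμρ hθ2,
                  sigmaOp_theta op α Θ (Ne.symm hμν) hθ3, sigmaOp_other op α Θ hνρ hθ4]
              · simp only [sigmaOp_other op α Θ hμν hθ1, sigmaOp_theta op α Θ hμρ hθ2,
                  sigmaOp_other op α Θ (Ne.symm hμν) hθ3, sigmaOp_other op α Θ hνρ hθ4]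
        · by_cases hθ4 : Θ ν = ρ
          · by_cases hθ3 : Θ ν = μ
            · exact absurd (hθ3.symm.trans hθ4) hμρ
            · by_cases hθ1 : Θ μ = ν
              · simp only [sigmaOp_theta op α Θ hμν hθ1, sigmaOp_other op α Θ hμρ hθ2,
                  sigmaOp_other op α Θ (Ne.symm hμν) hθ3, sigmaOp_theta op α Θ hνρ hθ4]
              · simp only [sigmaOp_other op α Θ hμν hθ1, sigmaOp_other op α Θ hμρ hθ2,
                  sigmaOp_other op α Θ (Ne.symm hμν) hθ3, sigmaOp_theta op α Θ hνρ hθ4]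
          · by_cases hθ1 : Θ μ = ν
            · by_cases hθ3 : Θ ν = μ
              · simp only [sigmaOp_theta op α Θ hμν hθ1, sigmaOp_other op α Θ hμρ hθ2,
                  sigmaOp_theta op α Θ (Ne.symm hμν) hθ3, sigmaOp_other op α Θ hνρ hθ4]
              · simp only [sigmaOp_theta op α Θ hμν hθ1, sigmaOp_other op α Θ hμρ hθ2,
                  sigmaOp_other op α Θ (Ne.symm hμν) hθ3, sigmaOp_other op α Θ hνρ hθ4]
            · by_cases hθ3 : Θ ν = μ
              · simp only [sigmaOp_other op α Θ hμν hθ1, sigmaOp_other op α Θ hμρ hθ2,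
                  sigmaOp_theta op α Θ (Ne.symm hμν) hθ3, sigmaOp_other op α Θ hνρ hθ4]
              · simp only [sigmaOp_other op α Θ hμν hθ1, sigmaOp_other op α Θ hμρ hθ2,
                  sigmaOp_other op α Θ (Ne.symm hμν) hθ3, sigmaOp_other op α Θ hνρ hθ4]

end sigmaOpLaw

/-- The block construction along a permutation of the index set is a cycle
set; it is nondegenerate if every block is. -/
theorem sigmaOp_is_cycle_set {ι : Type*} [DecidableEq ι] {X : ι → Type*}
    (op : ∀ i, X i → X i → X i) (hop : ∀ i, IsCycleSet (op i))
    (α : ∀ i, Equiv.Perm (X i))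
    (hα : ∀ i a b, α i (op i a b) = op i (α i a) (α i b))
    (Θ : Equiv.Perm ι) :
    IsCycleSet (sigmaOp op α Θ) ∧
    ((∀ i, IsNondegenerate (op i)) → IsNondegenerate (sigmaOp op α Θ)) := by
  refine ⟨⟨sigmaOp_bij op α Θ (fun i => (hop i).1), sigmaOp_law op α Θ (fun i => (hop i).2) hα⟩, fun hnd => sigmaOp_nondeg op α Θ hnd⟩
end

section
/- Define recursively: X₀ = a one-point set with operation x ⋆₀ y = y and s₀ = identity; and for m ≥ 0, X_{m+1} = X_m ⊔ X_m (binary sum) with s_{m+1} = the swap of the two summands, and operation ⋆_{m+1} given by inl a ⋆ inl b = inl(a ⋆_m b), inr a ⋆ inr b = inr(a ⋆_m b), inl a ⋆ inr b = inr(s_m(b)), inr a ⋆ inl b = inl(s_m(b)). Further define q_{m+1} : X_{m+1} → X_m by: q₁ is the constant map X₁ → X₀, and for m ≥ 1, q_{m+1}(inl a) = inl(q_m(a)) and q_{m+1}(inr a) = inr(q_m(a)). Then for every m: (1) ⋆_m is a nondegenerate cycle set operation on X_m (a set of size 2^m); (2) for all x, y ∈ X_{m+1}, the left translations satisfy ψ_x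 = ψ_y if and only if q_{m+1}(x) = q_{m+1}(y); and (3) q_{m+1}(x ⋆_{m+1} y) = q_{m+1}(x) ⋆_m q_{m+1}(y) for all x, y ∈ X_{m+1}. Hence the retraction of X_{m+1} is isomorphic to X_m, and X_{m+1} is a multipermutation solution of level m+1. -/
/-- `Xseq m` is the underlying set of the level-`m` multipermutation solution:
a binary tree of depth `m`, of size `2^m`. -/
def Xseq : ℕ → Type
  | 0 => PUnit
  | m + 1 => Xseq m ⊕ Xseq m

/-- The swap `s_m` of the two summands of `Xseq m` (the identity for `m = 0`). -/
def sswap : (m : ℕ) → Xseq m → Xseq m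
  | 0, x => x
  | _ + 1, Sum.inl a => Sum.inr a
  | _ + 1, Sum.inr a => Sum.inl a

/-- The recursively defined cycle set operation `⋆_m` on `Xseq m`. -/
def opm : (m : ℕ) → Xseq m → Xseq m → Xseq m
  | 0, _, y => y
  | m + 1, Sum.inl a, Sum.inl b => Sum.inl (opm m a b)
  | m + 1, Sum.inr a, Sum.inr b => Sum.inr (opm m a b)
  | m + 1, Sum.inl _, Sum.inr b => Sum.inr (sswap m b)
  | m + 1, Sum.inr _, Sum.inl b => Sum.inl (sswap m b)

/-- The retraction map `q_{m+1} : Xseq (m+1) → Xseq m`. -/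
def qm : (m : ℕ) → Xseq (m + 1) → Xseq m
  | 0, _ => PUnit.unit
  | m + 1, Sum.inl a => Sum.inl (qm m a)
  | m + 1, Sum.inr a => Sum.inr (qm m a)

/-!
Everything goes by induction on `m` through the block form of `⋆_{m+1}`: the left translation
by `inl a` is `ψ_a ⊕ s_m`, the one by `inr a` is `s_m ⊕ ψ_a`, and `s_m` is an automorphism of
`(Xseq m, ⋆_m)`, so bijectivity, the cycle identity and the homomorphism property of `q` reduce
to level `m`. For the retraction, `ψ_{inl a} ≠ ψ_{inr b}` on `Xseq (m+2)`: otherwise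
`ψ_b = s_{m+1}`, impossible since `ψ_b` keeps the summand containing `b` while `s_{m+1}`
exchanges the summands. So equal translations put `x, y` in the same summand, and the question
drops one level.
-/

theorem sswap_involutive : ∀ m, Function.Involutive (sswap m)
  | 0, _ => rfl
  | _ + 1, .inl _ => rfl
  | _ + 1, .inr _ => rfl

theorem sswap_opm : ∀ (m : ℕ) (a b : Xseq m),
    sswap m (opm m a b) = opm m (sswap m a) (sswap m b)
  | 0, _, _ => rfl
  | _ + 1, .inl _, .inl _ => rfl
  | _ + 1, .inl _, .inr _ => rfl
  | _ + 1, .inr _, .inl _ => rfl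
  | _ + 1, .inr _, .inr _ => rfl

theorem qm_sswap : ∀ (m : ℕ) (x : Xseq (m + 1)), qm m (sswap (m + 1) x) = sswap m (qm m x)
  | 0, _ => rfl
  | _ + 1, .inl _ => rfl
  | _ + 1, .inr _ => rfl

theorem opm_succ_inl (m : ℕ) (a : Xseq m) :
    opm (m + 1) (.inl a) = Sum.map (opm m a) (sswap m) :=
  funext fun y => by cases y <;> rfl

theorem opm_succ_inr (m : ℕ) (a : Xseq m) :
    opm (m + 1) (.inr a) = Sum.map (sswap m) (opm m a) :=
  funext fun y => by cases y <;> rfl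

theorem opm_self_succ (m : ℕ) :
    (fun x : Xseq (m + 1) => opm (m + 1) x x) =
      Sum.map (fun a => opm m a a) (fun a => opm m a a) :=
  funext fun x => by cases x <;> rfl

theorem opm_bijective : ∀ (m : ℕ) (x : Xseq m), Function.Bijective (opm m x)
  | 0, _ => Function.bijective_id
  | m + 1, .inl a => by
    rw [opm_succ_inl]; exact (opm_bijective m a).sumMap (sswap_involutive m).bijective
  | m + 1, .inr a => by
    rw [opm_succ_inr]; exact (sswap_involutive m).bijective.sumMap (opm_bijective m a)

theorem opm_opm_opm_comm : ∀ (m : ℕ) (x y z : Xseq m),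
    opm m (opm m x y) (opm m x z) = opm m (opm m y x) (opm m y z)
  | 0, _, _, _ => rfl
  | m + 1, x, y, z => by
    rcases x with a | a <;> rcases y with b | b <;> rcases z with c | c <;>
      simp only [opm, sswap_opm, sswap_involutive m _, opm_opm_opm_comm m] <;> rfl

theorem isCycleSet_opm (m : ℕ) : IsCycleSet (opm m) :=
  ⟨opm_bijective m, opm_opm_opm_comm m⟩

theorem isNondegenerate_opm : ∀ m, IsNondegenerate (opm m)
  | 0 => Function.bijective_id
  | m + 1 => by
    rw [IsNondegenerate, opm_self_succ]
    exact (isNondegenerate_opm m).sumMap (isNondegenerate_opm m)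

def Xseq.equivFin : (m : ℕ) → Xseq m ≃ Fin (2 ^ m)
  | 0 => Equiv.ofUnique PUnit (Fin 1)
  | m + 1 => (Equiv.sumCongr (Xseq.equivFin m) (Xseq.equivFin m)).trans <|
      finSumFinEquiv.trans <| finCongr (by rw [pow_succ, mul_two])

instance (m : ℕ) : Nonempty (Xseq m) :=
  ⟨(Xseq.equivFin m).symm ⟨0, by positivity⟩⟩

theorem opm_ne_sswap (m : ℕ) (x : Xseq (m + 1)) : opm (m + 1) x ≠ sswap (m + 1) := by
  intro h
  obtain ⟨w⟩ : Nonempty (Xseq m) := inferInstance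
  cases x with
  | inl a => exact Sum.inl_ne_inr (congrFun h (.inl w))
  | inr a => exact Sum.inr_ne_inl (congrFun h (.inr w))

theorem opm_succ_succ_inl_ne_inr (m : ℕ) (a b : Xseq (m + 1)) :
    opm (m + 2) (.inl a) ≠ opm (m + 2) (.inr b) := by
  intro h
  refine opm_ne_sswap m b (funext fun w => ?_)
  exact (Sum.inr_injective (congrFun h (.inr w))).symm

theorem opm_succ_inl_eq_iff (m : ℕ) (a b : Xseq m) :
    opm (m + 1) (.inl a) = opm (m + 1) (.inl b) ↔ opm m a = opm m b :=
  ⟨fun h => funext fun w => Sum.inl_injective (congrFun h (.inl w)),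
    fun h => by rw [opm_succ_inl, opm_succ_inl, h]⟩

theorem opm_succ_inr_eq_iff (m : ℕ) (a b : Xseq m) :
    opm (m + 1) (.inr a) = opm (m + 1) (.inr b) ↔ opm m a = opm m b :=
  ⟨fun h => funext fun w => Sum.inr_injective (congrFun h (.inr w)),
    fun h => by rw [opm_succ_inr, opm_succ_inr, h]⟩

theorem opm_succ_eq_iff : ∀ (m : ℕ) (x y : Xseq (m + 1)),
    opm (m + 1) x = opm (m + 1) y ↔ qm m x = qm m y
  | 0, x, y => by
    refine iff_of_true (funext fun z => ?_) rfl
    rcases x with ⟨⟩ | ⟨⟩ <;> rcases y with ⟨⟩ | ⟨⟩ <;> rcases z with ⟨⟩ | ⟨⟩ <;>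
      rfl
  | m + 1, .inl a, .inl b =>
    (opm_succ_inl_eq_iff _ a b).trans <|
      (opm_succ_eq_iff m a b).trans Sum.inl_injective.eq_iff.symm
  | m + 1, .inr a, .inr b =>
    (opm_succ_inr_eq_iff _ a b).trans <|
      (opm_succ_eq_iff m a b).trans Sum.inr_injective.eq_iff.symm
  | m + 1, .inl a, .inr b => iff_of_false (opm_succ_succ_inl_ne_inr m a b) Sum.inl_ne_inr
  | m + 1, .inr a, .inl b =>
    iff_of_false (fun h => opm_succ_succ_inl_ne_inr m b a h.symm) Sum.inr_ne_inl

theorem qm_opm : ∀ (m : ℕ) (x y : Xseq (m + 1)),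
    qm m (opm (m + 1) x y) = opm m (qm m x) (qm m y)
  | 0, _, _ => rfl
  | m + 1, .inl a, .inl b => congrArg Sum.inl (qm_opm m a b)
  | m + 1, .inr a, .inr b => congrArg Sum.inr (qm_opm m a b)
  | m + 1, .inl _, .inr b => congrArg Sum.inr (qm_sswap m b)
  | m + 1, .inr _, .inl b => congrArg Sum.inl (qm_sswap m b)

/-- For every `m`: `⋆_m` is a nondegenerate cycle set operation on a set of
size `2^m`; two elements of `Xseq (m+1)` have equal left translations iff they
have the same image under `q_{m+1}`; and `q_{m+1}` is a homomorphism of cycle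
sets. Hence `Ret(Xseq (m+1)) ≅ Xseq m` and `Xseq (m+1)` is a multipermutation
solution of level `m+1`. -/
theorem multipermutation_tower (m : ℕ) :
    (IsCycleSet (opm m) ∧ IsNondegenerate (opm m) ∧
      Nonempty (Xseq m ≃ Fin (2 ^ m))) ∧
    (∀ x y : Xseq (m + 1),
      (∀ z, opm (m + 1) x z = opm (m + 1) y z) ↔ qm m x = qm m y) ∧
    (∀ x y : Xseq (m + 1),
      qm m (opm (m + 1) x y) = opm m (qm m x) (qm m y)) :=
  ⟨⟨isCycleSet_opm m, isNondegenerate_opm m, ⟨Xseq.equivFin m⟩⟩,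
    fun x y => funext_iff.symm.trans (opm_succ_eq_iff m x y), qm_opm m⟩
end
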